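/- There exists a colouring γ_P : PS → {green, red} of the Peres set that belongs to exactly one PKS event, namely R_{B₁₁} where B₁₁ is the triple of mutually orthogonal rays spanned by (1,0,0), (0,2,1) and (0,−1,2). That is: γ_P colours all three rays of B₁₁ red; for every other triple B of mutually orthogonal rays of PS, γ_P colours at least one ray of B green; and no two orthogonal rays of PS are both coloured green by γ_P. -/
import Mathlib


noncomputable section

/-- Vectors in `ℝ³`. -/
abbrev V3 : Type := Fin 3 → ℝ

/-- The standard inner product on `ℝ³`. -/
def dot3 (x y : V3) : ℝ := x 0 * y 0 + x 1 * y 1 + x 2 * y 2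

/-- The multiset of absolute values of the coordinates of a vector in `ℝ³`. -/
def absCoords (x : V3) : Multiset ℝ := {|x 0|, |x 1|, |x 2|}

/-- The Peres set `PS`: the 33 rays (1-dimensional linear subspaces) of `ℝ³` spanned by
nonzero vectors whose multiset of absolute values of coordinates is one of
`{0,0,1}`, `{0,1,1}`, `{0,1,2}`, `{1,1,2}`. -/
def PeresSet : Set (Submodule ℝ V3) :=
  {L | ∃ v : V3, v ≠ 0 ∧ L = Submodule.span ℝ {v} ∧
    (absCoords v = {0, 0, 1} ∨ absCoords v = {0, 1, 1} ∨
      absCoords v = {0, 1, 2} ∨ absCoords v = {1, 1, 2})}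

/-- Two rays are orthogonal if their elements are orthogonal for the standard
inner product on `ℝ³`. -/
def RayOrtho (L M : Submodule ℝ V3) : Prop := ∀ x ∈ L, ∀ y ∈ M, dot3 x y = 0

/-- Three mutually orthogonal rays. -/
def MutuallyOrtho (L M N : Submodule ℝ V3) : Prop :=
  RayOrtho L M ∧ RayOrtho L N ∧ RayOrtho M N

/-- The two colours. -/
inductive Colour : Type
  | green
  | red
deriving DecidableEq

/-- A colouring of the Peres set. -/
def Colouring : Type := {L : Submodule ℝ V3 // L ∈ PeresSet} → Colour

/-- The PKS events: subsets of the space `Ω` of colourings of the form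
`R_B` (all three rays of a triple `B` of mutually orthogonal rays of `PS` coloured red)
or `G_P` (both rays of an orthogonal pair `P` in `PS` coloured green). -/
def IsPKSEvent (E : Set Colouring) : Prop :=
  (∃ u v w : {L : Submodule ℝ V3 // L ∈ PeresSet}, MutuallyOrtho u.1 v.1 w.1 ∧
      E = {γ : Colouring | γ u = Colour.red ∧ γ v = Colour.red ∧ γ w = Colour.red}) ∨
  (∃ u v : {L : Submodule ℝ V3 // L ∈ PeresSet}, RayOrtho u.1 v.1 ∧
      E = {γ : Colouring | γ u = Colour.green ∧ γ v = Colour.green})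

/-- The multiplicative co-event `A*` with support `A`: `A*(B) = 1` iff `A ⊆ B`. -/
def coevent (A : Set Colouring) : Set Colouring → ZMod 2 :=
  open scoped Classical in fun B => if A ⊆ B then 1 else 0


/-- The basis `B₁₁`, spanned by `(1,0,0)`, `(0,2,1)` and `(0,−1,2)`. -/
def B11 : Set (Submodule ℝ V3) :=
  {Submodule.span ℝ {(![1, 0, 0] : V3)}, Submodule.span ℝ {(![0, 2, 1] : V3)},
    Submodule.span ℝ {(![0, -1, 2] : V3)}}

-- ===== auxiliary machinery =====


def ivl : List (ℤ × ℤ × ℤ) := [(0,0,1),(0,-1,2),(0,1,-1),(0,1,0),(0,1,1),(0,1,2),(0,2,-1),(0,2,1),(1,-2,-1),(1,-2,0),(1,-2,1),(1,-1,-2),(1,-1,0),(1,-1,2),(1,0,-2),(1,0,-1),(1,0,0),(1,0,1),(1,0,2),(1,1,-2),(1,1,0),(1,1,2),(1,2,-1),(1,2,0),(1,2,1),(2,-1,-1),(2,-1,0),(2,-1,1),(2,0,-1),(2,0,1),(2,1,-1),(2,1,0),(2,1,1)]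

def iv (i : Fin 33) : ℤ × ℤ × ℤ := ivl.get ⟨i.1, by norm_num [ivl]⟩

def pvec (i : Fin 33) : V3 := ![((iv i).1 : ℝ), ((iv i).2.1 : ℝ), ((iv i).2.2 : ℝ)]

def idot (i j : Fin 33) : ℤ :=
  (iv i).1 * (iv j).1 + (iv i).2.1 * (iv j).2.1 + (iv i).2.2 * (iv j).2.2

def grn (i : Fin 33) : Bool := decide (i.1 ∈ [0, 2, 5, 8, 11, 13, 14, 15, 18, 19, 21])

lemma pvec0 (i : Fin 33) : pvec i 0 = ((iv i).1 : ℝ) := rfl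
lemma pvec1 (i : Fin 33) : pvec i 1 = ((iv i).2.1 : ℝ) := rfl
lemma pvec2 (i : Fin 33) : pvec i 2 = ((iv i).2.2 : ℝ) := rfl

lemma dot_pvec (i j : Fin 33) : dot3 (pvec i) (pvec j) = ((idot i j : ℤ) : ℝ) := by
  simp only [dot3, pvec0, pvec1, pvec2, idot]; push_cast; ring

lemma span_neg_singleton (x : V3) : Submodule.span ℝ {-x} = Submodule.span ℝ {x} := by
  simpa using Submodule.span_singleton_smul_eq (R := ℝ) (isUnit_one.neg) x

lemma ms_sq {a b c x y z : ℝ} (h : ({a,b,c} : Multiset ℝ) = {x,y,z}) :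
    a^2+b^2+c^2 = x^2+y^2+z^2 := by
  have h2 := congrArg (fun s : Multiset ℝ => (s.map (·^2)).sum) h
  simp at h2; linarith

lemma ms_quart {a b c x y z : ℝ} (h : ({a,b,c} : Multiset ℝ) = {x,y,z}) :
    a^4+b^4+c^4 = x^4+y^4+z^4 := by
  have h2 := congrArg (fun s : Multiset ℝ => (s.map (·^4)).sum) h
  simp at h2; linarith

lemma quart_abs (x : ℝ) : |x|^4 = x^4 := by
  rw [← abs_pow]; exact abs_of_nonneg (by positivity)

lemma rayOrtho_span_iff (x y : V3) :
    RayOrtho (Submodule.span ℝ {x}) (Submodule.span ℝ {y}) ↔ dot3 x y = 0 := by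
  constructor
  · intro h
    exact h x (Submodule.mem_span_singleton_self x) y (Submodule.mem_span_singleton_self y)
  · intro h a ha b hb
    obtain ⟨s, rfl⟩ := Submodule.mem_span_singleton.mp ha
    obtain ⟨t, rfl⟩ := Submodule.mem_span_singleton.mp hb
    simp only [dot3, Pi.smul_apply, smul_eq_mul] at h ⊢
    linear_combination (s*t) * h

lemma cross_of_span_eq {x y : V3} (h : Submodule.span ℝ {x} = Submodule.span ℝ {y})
    (m n : Fin 3) : x m * y n = x n * y m := by
  have hx : x ∈ Submodule.span ℝ {y} := h ▸ Submodule.mem_span_singleton_self x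
  obtain ⟨a, rfl⟩ := Submodule.mem_span_singleton.mp hx
  simp only [Pi.smul_apply, smul_eq_mul]; ring

set_option maxRecDepth 100000 in
lemma C0 : ∀ i j : Fin 33, i ≠ j →
    ¬((iv i).1 * (iv j).2.1 = (iv i).2.1 * (iv j).1 ∧
      (iv i).1 * (iv j).2.2 = (iv i).2.2 * (iv j).1 ∧
      (iv i).2.1 * (iv j).2.2 = (iv i).2.2 * (iv j).2.1) := by decide

lemma spanInj {i j : Fin 33}
    (h : Submodule.span ℝ {pvec i} = Submodule.span ℝ {pvec j}) : i = j := by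
  by_contra hne
  have h01 := cross_of_span_eq h 0 1
  have h02 := cross_of_span_eq h 0 2
  have h12 := cross_of_span_eq h 1 2
  simp only [pvec0, pvec1, pvec2] at h01 h02 h12
  exact C0 i j hne ⟨by exact_mod_cast h01, by exact_mod_cast h02, by exact_mod_cast h12⟩

set_option maxRecDepth 100000 in
lemma C3 : ∀ i j : Fin 33, grn i = true → grn j = true → idot i j ≠ 0 := by decide

def C2P (i j k : Fin 33) : Prop := grn i = false → grn j = false → grn k = false →
    idot i j = 0 → idot i k = 0 → idot j k = 0 →
    ((i = 16 ∧ j = 7 ∧ k = 1) ∨ (i = 16 ∧ j = 1 ∧ k = 7) ∨ (i = 7 ∧ j = 16 ∧ k = 1) ∨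
     (i = 7 ∧ j = 1 ∧ k = 16) ∨ (i = 1 ∧ j = 16 ∧ k = 7) ∨ (i = 1 ∧ j = 7 ∧ k = 16))

instance (i j k : Fin 33) : Decidable (C2P i j k) := by unfold C2P; infer_instance

set_option maxRecDepth 1000000 in
lemma C2b : ((List.finRange 33).all fun i => (List.finRange 33).all fun j =>
    (List.finRange 33).all fun k => decide (C2P i j k)) = true := by decide

lemma C2 : ∀ i j k : Fin 33, C2P i j k := by
  have hb := C2b
  simp only [List.all_eq_true, decide_eq_true_eq] at hb
  exact fun i j k => hb i (List.mem_finRange i) j (List.mem_finRange j) k (List.mem_finRange k)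

lemma pv0 : pvec (0 : Fin 33) = ![0, 0, 1] := by
  have h : iv (0 : Fin 33) = (0,0,1) := by decide
  funext j; fin_cases j <;> norm_num [pvec, h]
lemma pv1 : pvec (1 : Fin 33) = ![0, -1, 2] := by
  have h : iv (1 : Fin 33) = (0,-1,2) := by decide
  funext j; fin_cases j <;> norm_num [pvec, h]
lemma pv2 : pvec (2 : Fin 33) = ![0, 1, -1] := by
  have h : iv (2 : Fin 33) = (0,1,-1) := by decide
  funext j; fin_cases j <;> norm_num [pvec, h]
lemma pv3 : pvec (3 : Fin 33) = ![0, 1, 0] := by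
  have h : iv (3 : Fin 33) = (0,1,0) := by decide
  funext j; fin_cases j <;> norm_num [pvec, h]
lemma pv4 : pvec (4 : Fin 33) = ![0, 1, 1] := by
  have h : iv (4 : Fin 33) = (0,1,1) := by decide
  funext j; fin_cases j <;> norm_num [pvec, h]
lemma pv5 : pvec (5 : Fin 33) = ![0, 1, 2] := by
  have h : iv (5 : Fin 33) = (0,1,2) := by decide
  funext j; fin_cases j <;> norm_num [pvec, h]
lemma pv6 : pvec (6 : Fin 33) = ![0, 2, -1] := by
  have h : iv (6 : Fin 33) = (0,2,-1) := by decide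
  funext j; fin_cases j <;> norm_num [pvec, h]
lemma pv7 : pvec (7 : Fin 33) = ![0, 2, 1] := by
  have h : iv (7 : Fin 33) = (0,2,1) := by decide
  funext j; fin_cases j <;> norm_num [pvec, h]
lemma pv8 : pvec (8 : Fin 33) = ![1, -2, -1] := by
  have h : iv (8 : Fin 33) = (1,-2,-1) := by decide
  funext j; fin_cases j <;> norm_num [pvec, h]
lemma pv9 : pvec (9 : Fin 33) = ![1, -2, 0] := by
  have h : iv (9 : Fin 33) = (1,-2,0) := by decide
  funext j; fin_cases j <;> norm_num [pvec, h]
lemma pv10 : pvec (10 : Fin 33) = ![1, -2, 1] := by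
  have h : iv (10 : Fin 33) = (1,-2,1) := by decide
  funext j; fin_cases j <;> norm_num [pvec, h]
lemma pv11 : pvec (11 : Fin 33) = ![1, -1, -2] := by
  have h : iv (11 : Fin 33) = (1,-1,-2) := by decide
  funext j; fin_cases j <;> norm_num [pvec, h]
lemma pv12 : pvec (12 : Fin 33) = ![1, -1, 0] := by
  have h : iv (12 : Fin 33) = (1,-1,0) := by decide
  funext j; fin_cases j <;> norm_num [pvec, h]
lemma pv13 : pvec (13 : Fin 33) = ![1, -1, 2] := by
  have h : iv (13 : Fin 33) = (1,-1,2) := by decide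
  funext j; fin_cases j <;> norm_num [pvec, h]
lemma pv14 : pvec (14 : Fin 33) = ![1, 0, -2] := by
  have h : iv (14 : Fin 33) = (1,0,-2) := by decide
  funext j; fin_cases j <;> norm_num [pvec, h]
lemma pv15 : pvec (15 : Fin 33) = ![1, 0, -1] := by
  have h : iv (15 : Fin 33) = (1,0,-1) := by decide
  funext j; fin_cases j <;> norm_num [pvec, h]
lemma pv16 : pvec (16 : Fin 33) = ![1, 0, 0] := by
  have h : iv (16 : Fin 33) = (1,0,0) := by decide
  funext j; fin_cases j <;> norm_num [pvec, h]
lemma pv17 : pvec (17 : Fin 33) = ![1, 0, 1] := by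
  have h : iv (17 : Fin 33) = (1,0,1) := by decide
  funext j; fin_cases j <;> norm_num [pvec, h]
lemma pv18 : pvec (18 : Fin 33) = ![1, 0, 2] := by
  have h : iv (18 : Fin 33) = (1,0,2) := by decide
  funext j; fin_cases j <;> norm_num [pvec, h]
lemma pv19 : pvec (19 : Fin 33) = ![1, 1, -2] := by
  have h : iv (19 : Fin 33) = (1,1,-2) := by decide
  funext j; fin_cases j <;> norm_num [pvec, h]
lemma pv20 : pvec (20 : Fin 33) = ![1, 1, 0] := by
  have h : iv (20 : Fin 33) = (1,1,0) := by decide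
  funext j; fin_cases j <;> norm_num [pvec, h]
lemma pv21 : pvec (21 : Fin 33) = ![1, 1, 2] := by
  have h : iv (21 : Fin 33) = (1,1,2) := by decide
  funext j; fin_cases j <;> norm_num [pvec, h]
lemma pv22 : pvec (22 : Fin 33) = ![1, 2, -1] := by
  have h : iv (22 : Fin 33) = (1,2,-1) := by decide
  funext j; fin_cases j <;> norm_num [pvec, h]
lemma pv23 : pvec (23 : Fin 33) = ![1, 2, 0] := by
  have h : iv (23 : Fin 33) = (1,2,0) := by decide
  funext j; fin_cases j <;> norm_num [pvec, h]
lemma pv24 : pvec (24 : Fin 33) = ![1, 2, 1] := by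
  have h : iv (24 : Fin 33) = (1,2,1) := by decide
  funext j; fin_cases j <;> norm_num [pvec, h]
lemma pv25 : pvec (25 : Fin 33) = ![2, -1, -1] := by
  have h : iv (25 : Fin 33) = (2,-1,-1) := by decide
  funext j; fin_cases j <;> norm_num [pvec, h]
lemma pv26 : pvec (26 : Fin 33) = ![2, -1, 0] := by
  have h : iv (26 : Fin 33) = (2,-1,0) := by decide
  funext j; fin_cases j <;> norm_num [pvec, h]
lemma pv27 : pvec (27 : Fin 33) = ![2, -1, 1] := by
  have h : iv (27 : Fin 33) = (2,-1,1) := by decide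
  funext j; fin_cases j <;> norm_num [pvec, h]
lemma pv28 : pvec (28 : Fin 33) = ![2, 0, -1] := by
  have h : iv (28 : Fin 33) = (2,0,-1) := by decide
  funext j; fin_cases j <;> norm_num [pvec, h]
lemma pv29 : pvec (29 : Fin 33) = ![2, 0, 1] := by
  have h : iv (29 : Fin 33) = (2,0,1) := by decide
  funext j; fin_cases j <;> norm_num [pvec, h]
lemma pv30 : pvec (30 : Fin 33) = ![2, 1, -1] := by
  have h : iv (30 : Fin 33) = (2,1,-1) := by decide
  funext j; fin_cases j <;> norm_num [pvec, h]
lemma pv31 : pvec (31 : Fin 33) = ![2, 1, 0] := by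
  have h : iv (31 : Fin 33) = (2,1,0) := by decide
  funext j; fin_cases j <;> norm_num [pvec, h]
lemma pv32 : pvec (32 : Fin 33) = ![2, 1, 1] := by
  have h : iv (32 : Fin 33) = (2,1,1) := by decide
  funext j; fin_cases j <;> norm_num [pvec, h]

lemma classify (v : V3)
    (h : absCoords v = {0,0,1} ∨ absCoords v = {0,1,1} ∨
      absCoords v = {0,1,2} ∨ absCoords v = {1,1,2}) :
    ∃ i : Fin 33, Submodule.span ℝ {v} = Submodule.span ℝ {pvec i} := by
  have hco : ∀ j : Fin 3, v j = 0 ∨ v j = 1 ∨ v j = -1 ∨ v j = 2 ∨ v j = -2 := by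
    intro j
    have hj : |v j| ∈ absCoords v := by fin_cases j <;> simp [absCoords]
    have habs : |v j| = 0 ∨ |v j| = 1 ∨ |v j| = 2 := by
      rcases h with h|h|h|h <;> rw [h] at hj <;>
        simp only [Multiset.insert_eq_cons, Multiset.mem_cons, Multiset.mem_singleton] at hj <;>
        tauto
    rcases habs with h'|h'|h'
    · exact Or.inl (abs_eq_zero.mp h')
    · rcases (abs_eq (by norm_num : (0:ℝ) ≤ 1)).mp h' with h''|h'' <;> tauto
    · rcases (abs_eq (by norm_num : (0:ℝ) ≤ 2)).mp h' with h''|h'' <;> tauto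
  have hsq : ((v 0)^2 + (v 1)^2 + (v 2)^2 = 1 ∧ (v 0)^4 + (v 1)^4 + (v 2)^4 = 1) ∨
      ((v 0)^2 + (v 1)^2 + (v 2)^2 = 2 ∧ (v 0)^4 + (v 1)^4 + (v 2)^4 = 2) ∨
      ((v 0)^2 + (v 1)^2 + (v 2)^2 = 5 ∧ (v 0)^4 + (v 1)^4 + (v 2)^4 = 17) ∨
      ((v 0)^2 + (v 1)^2 + (v 2)^2 = 6 ∧ (v 0)^4 + (v 1)^4 + (v 2)^4 = 18) := by
    simp only [absCoords] at h
    rcases h with h|h|h|h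
    · refine Or.inl ⟨?_, ?_⟩
      · have t := ms_sq h; rw [sq_abs, sq_abs, sq_abs] at t; linarith
      · have t := ms_quart h; rw [quart_abs, quart_abs, quart_abs] at t; linarith
    · refine Or.inr (Or.inl ⟨?_, ?_⟩)
      · have t := ms_sq h; rw [sq_abs, sq_abs, sq_abs] at t; linarith
      · have t := ms_quart h; rw [quart_abs, quart_abs, quart_abs] at t; linarith
    · refine Or.inr (Or.inr (Or.inl ⟨?_, ?_⟩))
      · have t := ms_sq h; rw [sq_abs, sq_abs, sq_abs] at t; linarith
      · have t := ms_quart h; rw [quart_abs, quart_abs, quart_abs] at t; linarith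
    · refine Or.inr (Or.inr (Or.inr ⟨?_, ?_⟩))
      · have t := ms_sq h; rw [sq_abs, sq_abs, sq_abs] at t; linarith
      · have t := ms_quart h; rw [quart_abs, quart_abs, quart_abs] at t; linarith
  clear h
  rcases hco 0 with e0|e0|e0|e0|e0 <;> rcases hco 1 with e1|e1|e1|e1|e1 <;>
    rcases hco 2 with e2|e2|e2|e2|e2
  · norm_num [e0, e1, e2] at hsq
  · exact ⟨(0 : Fin 33), by rw [show v = ![0, 0, 1] from by funext j; fin_cases j; exacts [e0, e1, e2], pv0]⟩
  · refine ⟨(0 : Fin 33), ?_⟩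
    have hv : v = ![0, 0, -1] := by funext j; fin_cases j; exacts [e0, e1, e2]
    have hneg : (![0, 0, -1] : V3) = -(![0, 0, 1] : V3) := by funext j; fin_cases j <;> norm_num
    rw [hv, hneg, span_neg_singleton, pv0]
  · norm_num [e0, e1, e2] at hsq
  · norm_num [e0, e1, e2] at hsq
  · exact ⟨(3 : Fin 33), by rw [show v = ![0, 1, 0] from by funext j; fin_cases j; exacts [e0, e1, e2], pv3]⟩
  · exact ⟨(4 : Fin 33), by rw [show v = ![0, 1, 1] from by funext j; fin_cases j; exacts [e0, e1, e2], pv4]⟩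
  · exact ⟨(2 : Fin 33), by rw [show v = ![0, 1, -1] from by funext j; fin_cases j; exacts [e0, e1, e2], pv2]⟩
  · exact ⟨(5 : Fin 33), by rw [show v = ![0, 1, 2] from by funext j; fin_cases j; exacts [e0, e1, e2], pv5]⟩
  · refine ⟨(1 : Fin 33), ?_⟩
    have hv : v = ![0, 1, -2] := by funext j; fin_cases j; exacts [e0, e1, e2]
    have hneg : (![0, 1, -2] : V3) = -(![0, -1, 2] : V3) := by funext j; fin_cases j <;> norm_num
    rw [hv, hneg, span_neg_singleton, pv1]
  · refine ⟨(3 : Fin 33), ?_⟩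
    have hv : v = ![0, -1, 0] := by funext j; fin_cases j; exacts [e0, e1, e2]
    have hneg : (![0, -1, 0] : V3) = -(![0, 1, 0] : V3) := by funext j; fin_cases j <;> norm_num
    rw [hv, hneg, span_neg_singleton, pv3]
  · refine ⟨(2 : Fin 33), ?_⟩
    have hv : v = ![0, -1, 1] := by funext j; fin_cases j; exacts [e0, e1, e2]
    have hneg : (![0, -1, 1] : V3) = -(![0, 1, -1] : V3) := by funext j; fin_cases j <;> norm_num
    rw [hv, hneg, span_neg_singleton, pv2]
  · refine ⟨(4 : Fin 33), ?_⟩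
    have hv : v = ![0, -1, -1] := by funext j; fin_cases j; exacts [e0, e1, e2]
    have hneg : (![0, -1, -1] : V3) = -(![0, 1, 1] : V3) := by funext j; fin_cases j <;> norm_num
    rw [hv, hneg, span_neg_singleton, pv4]
  · exact ⟨(1 : Fin 33), by rw [show v = ![0, -1, 2] from by funext j; fin_cases j; exacts [e0, e1, e2], pv1]⟩
  · refine ⟨(5 : Fin 33), ?_⟩
    have hv : v = ![0, -1, -2] := by funext j; fin_cases j; exacts [e0, e1, e2]
    have hneg : (![0, -1, -2] : V3) = -(![0, 1, 2] : V3) := by funext j; fin_cases j <;> norm_num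
    rw [hv, hneg, span_neg_singleton, pv5]
  · norm_num [e0, e1, e2] at hsq
  · exact ⟨(7 : Fin 33), by rw [show v = ![0, 2, 1] from by funext j; fin_cases j; exacts [e0, e1, e2], pv7]⟩
  · exact ⟨(6 : Fin 33), by rw [show v = ![0, 2, -1] from by funext j; fin_cases j; exacts [e0, e1, e2], pv6]⟩
  · norm_num [e0, e1, e2] at hsq
  · norm_num [e0, e1, e2] at hsq
  · norm_num [e0, e1, e2] at hsq
  · refine ⟨(6 : Fin 33), ?_⟩
    have hv : v = ![0, -2, 1] := by funext j; fin_cases j; exacts [e0, e1, e2]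
    have hneg : (![0, -2, 1] : V3) = -(![0, 2, -1] : V3) := by funext j; fin_cases j <;> norm_num
    rw [hv, hneg, span_neg_singleton, pv6]
  · refine ⟨(7 : Fin 33), ?_⟩
    have hv : v = ![0, -2, -1] := by funext j; fin_cases j; exacts [e0, e1, e2]
    have hneg : (![0, -2, -1] : V3) = -(![0, 2, 1] : V3) := by funext j; fin_cases j <;> norm_num
    rw [hv, hneg, span_neg_singleton, pv7]
  · norm_num [e0, e1, e2] at hsq
  · norm_num [e0, e1, e2] at hsq
  · exact ⟨(16 : Fin 33), by rw [show v = ![1, 0, 0] from by funext j; fin_cases j; exacts [e0, e1, e2], pv16]⟩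
  · exact ⟨(17 : Fin 33), by rw [show v = ![1, 0, 1] from by funext j; fin_cases j; exacts [e0, e1, e2], pv17]⟩
  · exact ⟨(15 : Fin 33), by rw [show v = ![1, 0, -1] from by funext j; fin_cases j; exacts [e0, e1, e2], pv15]⟩
  · exact ⟨(18 : Fin 33), by rw [show v = ![1, 0, 2] from by funext j; fin_cases j; exacts [e0, e1, e2], pv18]⟩
  · exact ⟨(14 : Fin 33), by rw [show v = ![1, 0, -2] from by funext j; fin_cases j; exacts [e0, e1, e2], pv14]⟩
  · exact ⟨(20 : Fin 33), by rw [show v = ![1, 1, 0] from by funext j; fin_cases j; exacts [e0, e1, e2], pv20]⟩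
  · norm_num [e0, e1, e2] at hsq
  · norm_num [e0, e1, e2] at hsq
  · exact ⟨(21 : Fin 33), by rw [show v = ![1, 1, 2] from by funext j; fin_cases j; exacts [e0, e1, e2], pv21]⟩
  · exact ⟨(19 : Fin 33), by rw [show v = ![1, 1, -2] from by funext j; fin_cases j; exacts [e0, e1, e2], pv19]⟩
  · exact ⟨(12 : Fin 33), by rw [show v = ![1, -1, 0] from by funext j; fin_cases j; exacts [e0, e1, e2], pv12]⟩
  · norm_num [e0, e1, e2] at hsq
  · norm_num [e0, e1, e2] at hsq
  · exact ⟨(13 : Fin 33), by rw [show v = ![1, -1, 2] from by funext j; fin_cases j; exacts [e0, e1, e2], pv13]⟩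
  · exact ⟨(11 : Fin 33), by rw [show v = ![1, -1, -2] from by funext j; fin_cases j; exacts [e0, e1, e2], pv11]⟩
  · exact ⟨(23 : Fin 33), by rw [show v = ![1, 2, 0] from by funext j; fin_cases j; exacts [e0, e1, e2], pv23]⟩
  · exact ⟨(24 : Fin 33), by rw [show v = ![1, 2, 1] from by funext j; fin_cases j; exacts [e0, e1, e2], pv24]⟩
  · exact ⟨(22 : Fin 33), by rw [show v = ![1, 2, -1] from by funext j; fin_cases j; exacts [e0, e1, e2], pv22]⟩
  · norm_num [e0, e1, e2] at hsq
  · norm_num [e0, e1, e2] at hsq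
  · exact ⟨(9 : Fin 33), by rw [show v = ![1, -2, 0] from by funext j; fin_cases j; exacts [e0, e1, e2], pv9]⟩
  · exact ⟨(10 : Fin 33), by rw [show v = ![1, -2, 1] from by funext j; fin_cases j; exacts [e0, e1, e2], pv10]⟩
  · exact ⟨(8 : Fin 33), by rw [show v = ![1, -2, -1] from by funext j; fin_cases j; exacts [e0, e1, e2], pv8]⟩
  · norm_num [e0, e1, e2] at hsq
  · norm_num [e0, e1, e2] at hsq
  · refine ⟨(16 : Fin 33), ?_⟩
    have hv : v = ![-1, 0, 0] := by funext j; fin_cases j; exacts [e0, e1, e2]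
    have hneg : (![-1, 0, 0] : V3) = -(![1, 0, 0] : V3) := by funext j; fin_cases j <;> norm_num
    rw [hv, hneg, span_neg_singleton, pv16]
  · refine ⟨(15 : Fin 33), ?_⟩
    have hv : v = ![-1, 0, 1] := by funext j; fin_cases j; exacts [e0, e1, e2]
    have hneg : (![-1, 0, 1] : V3) = -(![1, 0, -1] : V3) := by funext j; fin_cases j <;> norm_num
    rw [hv, hneg, span_neg_singleton, pv15]
  · refine ⟨(17 : Fin 33), ?_⟩
    have hv : v = ![-1, 0, -1] := by funext j; fin_cases j; exacts [e0, e1, e2]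
    have hneg : (![-1, 0, -1] : V3) = -(![1, 0, 1] : V3) := by funext j; fin_cases j <;> norm_num
    rw [hv, hneg, span_neg_singleton, pv17]
  · refine ⟨(14 : Fin 33), ?_⟩
    have hv : v = ![-1, 0, 2] := by funext j; fin_cases j; exacts [e0, e1, e2]
    have hneg : (![-1, 0, 2] : V3) = -(![1, 0, -2] : V3) := by funext j; fin_cases j <;> norm_num
    rw [hv, hneg, span_neg_singleton, pv14]
  · refine ⟨(18 : Fin 33), ?_⟩
    have hv : v = ![-1, 0, -2] := by funext j; fin_cases j; exacts [e0, e1, e2]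
    have hneg : (![-1, 0, -2] : V3) = -(![1, 0, 2] : V3) := by funext j; fin_cases j <;> norm_num
    rw [hv, hneg, span_neg_singleton, pv18]
  · refine ⟨(12 : Fin 33), ?_⟩
    have hv : v = ![-1, 1, 0] := by funext j; fin_cases j; exacts [e0, e1, e2]
    have hneg : (![-1, 1, 0] : V3) = -(![1, -1, 0] : V3) := by funext j; fin_cases j <;> norm_num
    rw [hv, hneg, span_neg_singleton, pv12]
  · norm_num [e0, e1, e2] at hsq
  · norm_num [e0, e1, e2] at hsq
  · refine ⟨(11 : Fin 33), ?_⟩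
    have hv : v = ![-1, 1, 2] := by funext j; fin_cases j; exacts [e0, e1, e2]
    have hneg : (![-1, 1, 2] : V3) = -(![1, -1, -2] : V3) := by funext j; fin_cases j <;> norm_num
    rw [hv, hneg, span_neg_singleton, pv11]
  · refine ⟨(13 : Fin 33), ?_⟩
    have hv : v = ![-1, 1, -2] := by funext j; fin_cases j; exacts [e0, e1, e2]
    have hneg : (![-1, 1, -2] : V3) = -(![1, -1, 2] : V3) := by funext j; fin_cases j <;> norm_num
    rw [hv, hneg, span_neg_singleton, pv13]
  · refine ⟨(20 : Fin 33), ?_⟩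
    have hv : v = ![-1, -1, 0] := by funext j; fin_cases j; exacts [e0, e1, e2]
    have hneg : (![-1, -1, 0] : V3) = -(![1, 1, 0] : V3) := by funext j; fin_cases j <;> norm_num
    rw [hv, hneg, span_neg_singleton, pv20]
  · norm_num [e0, e1, e2] at hsq
  · norm_num [e0, e1, e2] at hsq
  · refine ⟨(19 : Fin 33), ?_⟩
    have hv : v = ![-1, -1, 2] := by funext j; fin_cases j; exacts [e0, e1, e2]
    have hneg : (![-1, -1, 2] : V3) = -(![1, 1, -2] : V3) := by funext j; fin_cases j <;> norm_num
    rw [hv, hneg, span_neg_singleton, pv19]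
  · refine ⟨(21 : Fin 33), ?_⟩
    have hv : v = ![-1, -1, -2] := by funext j; fin_cases j; exacts [e0, e1, e2]
    have hneg : (![-1, -1, -2] : V3) = -(![1, 1, 2] : V3) := by funext j; fin_cases j <;> norm_num
    rw [hv, hneg, span_neg_singleton, pv21]
  · refine ⟨(9 : Fin 33), ?_⟩
    have hv : v = ![-1, 2, 0] := by funext j; fin_cases j; exacts [e0, e1, e2]
    have hneg : (![-1, 2, 0] : V3) = -(![1, -2, 0] : V3) := by funext j; fin_cases j <;> norm_num
    rw [hv, hneg, span_neg_singleton, pv9]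
  · refine ⟨(8 : Fin 33), ?_⟩
    have hv : v = ![-1, 2, 1] := by funext j; fin_cases j; exacts [e0, e1, e2]
    have hneg : (![-1, 2, 1] : V3) = -(![1, -2, -1] : V3) := by funext j; fin_cases j <;> norm_num
    rw [hv, hneg, span_neg_singleton, pv8]
  · refine ⟨(10 : Fin 33), ?_⟩
    have hv : v = ![-1, 2, -1] := by funext j; fin_cases j; exacts [e0, e1, e2]
    have hneg : (![-1, 2, -1] : V3) = -(![1, -2, 1] : V3) := by funext j; fin_cases j <;> norm_num
    rw [hv, hneg, span_neg_singleton, pv10]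
  · norm_num [e0, e1, e2] at hsq
  · norm_num [e0, e1, e2] at hsq
  · refine ⟨(23 : Fin 33), ?_⟩
    have hv : v = ![-1, -2, 0] := by funext j; fin_cases j; exacts [e0, e1, e2]
    have hneg : (![-1, -2, 0] : V3) = -(![1, 2, 0] : V3) := by funext j; fin_cases j <;> norm_num
    rw [hv, hneg, span_neg_singleton, pv23]
  · refine ⟨(22 : Fin 33), ?_⟩
    have hv : v = ![-1, -2, 1] := by funext j; fin_cases j; exacts [e0, e1, e2]
    have hneg : (![-1, -2, 1] : V3) = -(![1, 2, -1] : V3) := by funext j; fin_cases j <;> norm_num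
    rw [hv, hneg, span_neg_singleton, pv22]
  · refine ⟨(24 : Fin 33), ?_⟩
    have hv : v = ![-1, -2, -1] := by funext j; fin_cases j; exacts [e0, e1, e2]
    have hneg : (![-1, -2, -1] : V3) = -(![1, 2, 1] : V3) := by funext j; fin_cases j <;> norm_num
    rw [hv, hneg, span_neg_singleton, pv24]
  · norm_num [e0, e1, e2] at hsq
  · norm_num [e0, e1, e2] at hsq
  · norm_num [e0, e1, e2] at hsq
  · exact ⟨(29 : Fin 33), by rw [show v = ![2, 0, 1] from by funext j; fin_cases j; exacts [e0, e1, e2], pv29]⟩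
  · exact ⟨(28 : Fin 33), by rw [show v = ![2, 0, -1] from by funext j; fin_cases j; exacts [e0, e1, e2], pv28]⟩
  · norm_num [e0, e1, e2] at hsq
  · norm_num [e0, e1, e2] at hsq
  · exact ⟨(31 : Fin 33), by rw [show v = ![2, 1, 0] from by funext j; fin_cases j; exacts [e0, e1, e2], pv31]⟩
  · exact ⟨(32 : Fin 33), by rw [show v = ![2, 1, 1] from by funext j; fin_cases j; exacts [e0, e1, e2], pv32]⟩
  · exact ⟨(30 : Fin 33), by rw [show v = ![2, 1, -1] from by funext j; fin_cases j; exacts [e0, e1, e2], pv30]⟩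
  · norm_num [e0, e1, e2] at hsq
  · norm_num [e0, e1, e2] at hsq
  · exact ⟨(26 : Fin 33), by rw [show v = ![2, -1, 0] from by funext j; fin_cases j; exacts [e0, e1, e2], pv26]⟩
  · exact ⟨(27 : Fin 33), by rw [show v = ![2, -1, 1] from by funext j; fin_cases j; exacts [e0, e1, e2], pv27]⟩
  · exact ⟨(25 : Fin 33), by rw [show v = ![2, -1, -1] from by funext j; fin_cases j; exacts [e0, e1, e2], pv25]⟩
  · norm_num [e0, e1, e2] at hsq
  · norm_num [e0, e1, e2] at hsq
  · norm_num [e0, e1, e2] at hsq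
  · norm_num [e0, e1, e2] at hsq
  · norm_num [e0, e1, e2] at hsq
  · norm_num [e0, e1, e2] at hsq
  · norm_num [e0, e1, e2] at hsq
  · norm_num [e0, e1, e2] at hsq
  · norm_num [e0, e1, e2] at hsq
  · norm_num [e0, e1, e2] at hsq
  · norm_num [e0, e1, e2] at hsq
  · norm_num [e0, e1, e2] at hsq
  · norm_num [e0, e1, e2] at hsq
  · refine ⟨(28 : Fin 33), ?_⟩
    have hv : v = ![-2, 0, 1] := by funext j; fin_cases j; exacts [e0, e1, e2]
    have hneg : (![-2, 0, 1] : V3) = -(![2, 0, -1] : V3) := by funext j; fin_cases j <;> norm_num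
    rw [hv, hneg, span_neg_singleton, pv28]
  · refine ⟨(29 : Fin 33), ?_⟩
    have hv : v = ![-2, 0, -1] := by funext j; fin_cases j; exacts [e0, e1, e2]
    have hneg : (![-2, 0, -1] : V3) = -(![2, 0, 1] : V3) := by funext j; fin_cases j <;> norm_num
    rw [hv, hneg, span_neg_singleton, pv29]
  · norm_num [e0, e1, e2] at hsq
  · norm_num [e0, e1, e2] at hsq
  · refine ⟨(26 : Fin 33), ?_⟩
    have hv : v = ![-2, 1, 0] := by funext j; fin_cases j; exacts [e0, e1, e2]
    have hneg : (![-2, 1, 0] : V3) = -(![2, -1, 0] : V3) := by funext j; fin_cases j <;> norm_num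
    rw [hv, hneg, span_neg_singleton, pv26]
  · refine ⟨(25 : Fin 33), ?_⟩
    have hv : v = ![-2, 1, 1] := by funext j; fin_cases j; exacts [e0, e1, e2]
    have hneg : (![-2, 1, 1] : V3) = -(![2, -1, -1] : V3) := by funext j; fin_cases j <;> norm_num
    rw [hv, hneg, span_neg_singleton, pv25]
  · refine ⟨(27 : Fin 33), ?_⟩
    have hv : v = ![-2, 1, -1] := by funext j; fin_cases j; exacts [e0, e1, e2]
    have hneg : (![-2, 1, -1] : V3) = -(![2, -1, 1] : V3) := by funext j; fin_cases j <;> norm_num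
    rw [hv, hneg, span_neg_singleton, pv27]
  · norm_num [e0, e1, e2] at hsq
  · norm_num [e0, e1, e2] at hsq
  · refine ⟨(31 : Fin 33), ?_⟩
    have hv : v = ![-2, -1, 0] := by funext j; fin_cases j; exacts [e0, e1, e2]
    have hneg : (![-2, -1, 0] : V3) = -(![2, 1, 0] : V3) := by funext j; fin_cases j <;> norm_num
    rw [hv, hneg, span_neg_singleton, pv31]
  · refine ⟨(30 : Fin 33), ?_⟩
    have hv : v = ![-2, -1, 1] := by funext j; fin_cases j; exacts [e0, e1, e2]
    have hneg : (![-2, -1, 1] : V3) = -(![2, 1, -1] : V3) := by funext j; fin_cases j <;> norm_num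
    rw [hv, hneg, span_neg_singleton, pv30]
  · refine ⟨(32 : Fin 33), ?_⟩
    have hv : v = ![-2, -1, -1] := by funext j; fin_cases j; exacts [e0, e1, e2]
    have hneg : (![-2, -1, -1] : V3) = -(![2, 1, 1] : V3) := by funext j; fin_cases j <;> norm_num
    rw [hv, hneg, span_neg_singleton, pv32]
  · norm_num [e0, e1, e2] at hsq
  · norm_num [e0, e1, e2] at hsq
  · norm_num [e0, e1, e2] at hsq
  · norm_num [e0, e1, e2] at hsq
  · norm_num [e0, e1, e2] at hsq
  · norm_num [e0, e1, e2] at hsq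
  · norm_num [e0, e1, e2] at hsq
  · norm_num [e0, e1, e2] at hsq
  · norm_num [e0, e1, e2] at hsq
  · norm_num [e0, e1, e2] at hsq
  · norm_num [e0, e1, e2] at hsq
  · norm_num [e0, e1, e2] at hsq

open scoped Classical in
def gammaP : Colouring :=
  fun u => if ∃ i : Fin 33, grn i = true ∧ u.1 = Submodule.span ℝ {pvec i}
    then Colour.green else Colour.red

lemma gammaP_green_iff (u : {L : Submodule ℝ V3 // L ∈ PeresSet}) :
    gammaP u = Colour.green ↔
      ∃ i : Fin 33, grn i = true ∧ u.1 = Submodule.span ℝ {pvec i} := by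
  by_cases h : ∃ i : Fin 33, grn i = true ∧ u.1 = Submodule.span ℝ {pvec i} <;>
    simp [gammaP, h]

lemma mem_classify (u : {L : Submodule ℝ V3 // L ∈ PeresSet}) :
    ∃ i : Fin 33, u.1 = Submodule.span ℝ {pvec i} := by
  obtain ⟨v, -, hL, habs⟩ := u.2
  obtain ⟨i, hi⟩ := classify v habs
  exact ⟨i, by rw [hL, hi]⟩

set_option maxHeartbeats 2000000 in
/-- There exists a colouring `γ_P` of the Peres set belonging to exactly one PKS event,
namely `R_{B₁₁}`: it colours all three rays of `B₁₁` red, every other triple of mutually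
orthogonal rays of `PS` gets at least one green ray, and no two orthogonal rays of `PS`
are both coloured green. -/
theorem stmt6_peres_colouring :
    ∃ γ : Colouring,
      (∀ u : {L : Submodule ℝ V3 // L ∈ PeresSet}, u.1 ∈ B11 → γ u = Colour.red) ∧
      (∀ u v w : {L : Submodule ℝ V3 // L ∈ PeresSet}, MutuallyOrtho u.1 v.1 w.1 →
        ({u.1, v.1, w.1} : Set (Submodule ℝ V3)) ≠ B11 →
        (γ u = Colour.green ∨ γ v = Colour.green ∨ γ w = Colour.green)) ∧
      (∀ u v : {L : Submodule ℝ V3 // L ∈ PeresSet}, RayOrtho u.1 v.1 →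
        ¬ (γ u = Colour.green ∧ γ v = Colour.green)) := by
  refine ⟨gammaP, ?_, ?_, ?_⟩
  · intro u hu
    have hred : ¬ ∃ i : Fin 33, grn i = true ∧ u.1 = Submodule.span ℝ {pvec i} := by
      rintro ⟨i, hgi, hui⟩
      simp only [B11, Set.mem_insert_iff, Set.mem_singleton_iff] at hu
      rcases hu with h|h|h
      · rw [← pv16] at h; obtain rfl := spanInj (h.symm.trans hui); exact absurd hgi (by decide)
      · rw [← pv7] at h; obtain rfl := spanInj (h.symm.trans hui); exact absurd hgi (by decide)
      · rw [← pv1] at h; obtain rfl := spanInj (h.symm.trans hui); exact absurd hgi (by decide)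
    have : gammaP u ≠ Colour.green := fun hg => hred ((gammaP_green_iff u).mp hg)
    cases hgam : gammaP u
    · exact absurd hgam this
    · rfl
  · intro u v w hmo hne
    by_contra hcon
    push_neg at hcon
    obtain ⟨hu, hv, hw⟩ := hcon
    obtain ⟨i, hi⟩ := mem_classify u
    obtain ⟨j, hj⟩ := mem_classify v
    obtain ⟨k, hk⟩ := mem_classify w
    have hgi : grn i = false := by
      cases hgi' : grn i
      · rfl
      · exact absurd ((gammaP_green_iff u).mpr ⟨i, hgi', hi⟩) hu
    have hgj : grn j = false := by
      cases hgj' : grn j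
      · rfl
      · exact absurd ((gammaP_green_iff v).mpr ⟨j, hgj', hj⟩) hv
    have hgk : grn k = false := by
      cases hgk' : grn k
      · rfl
      · exact absurd ((gammaP_green_iff w).mpr ⟨k, hgk', hk⟩) hw
    obtain ⟨o1, o2, o3⟩ := hmo
    rw [hi, hj] at o1
    rw [hi, hk] at o2
    rw [hj, hk] at o3
    have d1 : idot i j = 0 := by
      have t := (rayOrtho_span_iff _ _).mp o1; rw [dot_pvec] at t; exact_mod_cast t
    have d2 : idot i k = 0 := by
      have t := (rayOrtho_span_iff _ _).mp o2; rw [dot_pvec] at t; exact_mod_cast t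
    have d3 : idot j k = 0 := by
      have t := (rayOrtho_span_iff _ _).mp o3; rw [dot_pvec] at t; exact_mod_cast t
    have hC := C2 i j k hgi hgj hgk d1 d2 d3
    apply hne
    rcases hC with ⟨rfl,rfl,rfl⟩|⟨rfl,rfl,rfl⟩|⟨rfl,rfl,rfl⟩|⟨rfl,rfl,rfl⟩|⟨rfl,rfl,rfl⟩|⟨rfl,rfl,rfl⟩ <;>
      rw [hi, hj, hk] <;> simp only [pv1, pv7, pv16, B11] <;> ext x <;>
      simp only [Set.mem_insert_iff, Set.mem_singleton_iff] <;> tauto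
  · rintro u v ho ⟨hu, hv⟩
    obtain ⟨i, hgi, hi⟩ := (gammaP_green_iff u).mp hu
    obtain ⟨j, hgj, hj⟩ := (gammaP_green_iff v).mp hv
    rw [hi, hj] at ho
    have t := (rayOrtho_span_iff _ _).mp ho
    rw [dot_pvec] at t
    exact C3 i j hgi hgj (by exact_mod_cast t)

end
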